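/- arXiv:1909.13372 — 3 statements merged into one kernel-verified Lean document; each statement's English description precedes it below -/
import Mathlib

section
/- (Robinson's test, first equivalence) A first-order theory T is model complete if and only if every model of T is existentially closed for T. -/
/-! If every model of `T` is existentially closed, an embedding `f : M ↪ N` of models is shown to
preserve every formula by induction on the formula, simultaneously for all such embeddings. The
only nontrivial step is `∀`: since `M` is existentially closed in `N`, compactness (applied to the
elementary diagram of `M` together with the quantifier-free diagram of `N`) embeds `N` over `M`
into an elementary extension `P` of `M`. Then `P ⊨ T`, so for a universal formula true in `M` and
`b : N`, the instance at `b` holds in `P` by elementarity and is pulled back to `N` by the induction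
hypothesis for `N ↪ P`. -/

open FirstOrder FirstOrder.Language

universe u v

variable {L : FirstOrder.Language.{u, v}}

/-- A formula is *universal* if it has the form `∀ ȳ, χ` with `χ` quantifier-free. -/
def IsUniversalFormula {α : Type*} (φ : L.Formula α) : Prop :=
  ∃ (n : ℕ) (χ : L.BoundedFormula α n), χ.IsQF ∧ φ = χ.alls

/-- A formula is *existential* if it has the form `∃ ȳ, χ` with `χ` quantifier-free. -/
def IsExistentialFormula {α : Type*} (φ : L.Formula α) : Prop :=
  ∃ (n : ℕ) (χ : L.BoundedFormula α n), χ.IsQF ∧ φ = χ.exs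

/-- A theory is *model complete* if every embedding between models of it is elementary. -/
def IsModelComplete (T : L.Theory) : Prop :=
  ∀ (M N : Type (max u v)) [L.Structure M] [L.Structure N] [Nonempty M] [Nonempty N],
    M ⊨ T → N ⊨ T → ∀ (f : M ↪[L] N) (n : ℕ) (φ : L.Formula (Fin n)) (x : Fin n → M),
      φ.Realize (f ∘ x) ↔ φ.Realize x

/-- `M` is *existentially closed in `N` via* the embedding `f` if every existential formula
with parameters from `M` that holds in `N` (of the images) already holds in `M`. -/
def IsECVia {M N : Type (max u v)} [L.Structure M] [L.Structure N] (f : M ↪[L] N) : Prop :=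
  ∀ (k : ℕ) (φ : L.Formula (Fin k)), IsExistentialFormula φ →
    ∀ x : Fin k → M, φ.Realize (f ∘ x) → φ.Realize x

/-- `M` is *existentially closed for* the theory `T` if `M ⊨ T` and `M` is existentially
closed in every model of `T` via every embedding. -/
def IsECFor (T : L.Theory) (M : Type (max u v)) [L.Structure M] [Nonempty M] : Prop :=
  M ⊨ T ∧ ∀ (N : Type (max u v)) [L.Structure N] [Nonempty N], N ⊨ T →
    ∀ f : M ↪[L] N, IsECVia f

/-- `T_∀` : the set of universal sentences that are logical consequences of `T`. -/
def universalPart (T : L.Theory) : L.Theory :=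
  {φ : L.Sentence | IsUniversalFormula φ ∧ T ⊨ᵇ φ}

/-- `Tstar` is a *model companion* of `T`: `Tstar` is model complete, every model of `T`
embeds into a model of `Tstar`, and every model of `Tstar` embeds into a model of `T`. -/
def IsModelCompanion (T Tstar : L.Theory) : Prop :=
  IsModelComplete Tstar ∧
  (∀ (M : Type (max u v)) [L.Structure M] [Nonempty M], M ⊨ T →
     ∃ (N : Type (max u v)) (_ : L.Structure N) (_ : Nonempty N),
       N ⊨ Tstar ∧ Nonempty (M ↪[L] N)) ∧
  (∀ (M : Type (max u v)) [L.Structure M] [Nonempty M], M ⊨ Tstar →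
     ∃ (N : Type (max u v)) (_ : L.Structure N) (_ : Nonempty N),
       N ⊨ T ∧ Nonempty (M ↪[L] N))

universe w w'

open BoundedFormula

namespace FirstOrder.Language

theorem BoundedFormula.IsQF.restrictFreeVar {α β : Type*} [DecidableEq α] {n : ℕ}
    {φ : L.BoundedFormula α n} (hφ : φ.IsQF) (g : φ.freeVarFinset → β) :
    (φ.restrictFreeVar g).IsQF := by
  induction hφ with
  | falsum => exact isQF_bot
  | of_isAtomic ha =>
    cases ha with
    | equal => exact (IsAtomic.equal _ _).isQF
    | rel => exact (IsAtomic.rel _ _).isQF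
  | imp _ _ ih₁ ih₂ => exact (ih₁ _).imp (ih₂ _)

theorem BoundedFormula.isQF_iInf {α β : Type*} [Finite β] {n : ℕ} {φ : β → L.BoundedFormula α n}
    (hφ : ∀ b, (φ b).IsQF) : (iInf φ).IsQF := by
  rw [iInf]
  induction (@Finset.univ β (Fintype.ofFinite β)).toList with
  | nil => exact IsQF.top
  | cons b l ih => exact (hφ b).inf ih

theorem exists_realize_of_finitely_realizable {α : Type w} {Q : Set (L.Formula α)}
    (hQ : ∀ Q₀ : Finset (L.Formula α), ↑Q₀ ⊆ Q →
      ∃ (K : Type w') (_ : L.Structure K) (_ : Nonempty K) (v : α → K), ∀ φ ∈ Q₀, φ.Realize v) :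
    ∃ (K : Type (max u v w)) (_ : L.Structure K) (_ : Nonempty K) (v : α → K),
      ∀ φ ∈ Q, φ.Realize v := by
  classical
  obtain ⟨K⟩ : Theory.IsSatisfiable (Formula.equivSentence '' Q : L[[α]].Theory) := by
    refine Theory.isSatisfiable_iff_isFinitelySatisfiable.2 fun T₀ hT₀ => ?_
    obtain ⟨K, _, _, v, hv⟩ := hQ (T₀.image Formula.equivSentence.symm) fun φ hφ => by
      obtain ⟨ψ, hψ, rfl⟩ := Finset.mem_image.1 hφ
      obtain ⟨φ, hφQ, rfl⟩ := hT₀ hψ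
      simpa using hφQ
    let := constantsOn.structure v
    have : K ⊨ (T₀ : L[[α]].Theory) := (Theory.model_iff _).2 fun ψ hψ =>
      (Formula.realize_equivSentence_symm K ψ v).1 (hv _ (Finset.mem_image_of_mem _ hψ))
    exact Theory.Model.isSatisfiable K
  let : L.Structure K := (L.lhomWithConstants α).reduct K
  refine ⟨K, inferInstance, inferInstance, fun a => (L.con a : K), fun φ hφ => ?_⟩
  exact (Formula.realize_equivSentence K φ).1
    (Theory.realize_sentence_of_mem _ (Set.mem_image_of_mem _ hφ))

variable {M K : Type*} [L.Structure M] [L.Structure K]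

def ElementaryEmbedding.ofRealize (h : M → K)
    (hh : ∀ φ : L.Formula M, φ.Realize id → φ.Realize h) : M ↪ₑ[L] K where
  toFun := h
  map_formula' n φ x := by
    have preserves : ∀ φ : L.Formula (Fin n), φ.Realize x → φ.Realize (h ∘ x) := fun φ hφ => by
      simpa using hh (φ.relabel x) (by simpa using hφ)
    refine ⟨fun hφ => not_not.1 fun hn => ?_, preserves φ⟩
    exact Formula.realize_not.1 (preserves φ.not (Formula.realize_not.2 hn)) hφ

def Embedding.ofRealizeQF (g : M → K)
    (hg : ∀ φ : L.Formula M, φ.IsQF → φ.Realize id → φ.Realize g) : M ↪[L] K :=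
  have reflects (φ : L.Formula M) (hφ : φ.IsQF) : φ.Realize g ↔ φ.Realize id :=
    ⟨fun hφg => not_not.1 fun hn =>
      Formula.realize_not.1 (hg φ.not hφ.not (Formula.realize_not.2 hn)) hφg, hg φ hφ⟩
  { toFun := g
    inj' := fun a b hab => by
      simpa using (reflects ((Term.var a).equal (Term.var b)) (IsAtomic.equal _ _).isQF).1
        (by simpa using hab)
    map_fun' := fun F x => by
      simpa [Function.comp_def, eq_comm] using
        (reflects ((Term.func F fun i => Term.var (x i)).equal (Term.var (Structure.funMap F x)))
          (IsAtomic.equal _ _).isQF).2 (by simp)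
    map_rel' := fun R x => by
      simpa [Function.comp_def] using
        reflects (R.formula fun i => Term.var (x i)) (IsAtomic.rel _ _).isQF }

end FirstOrder.Language

theorem isExistentialFormula_iExs {α β : Type*} [Finite β] {χ : L.Formula (α ⊕ β)}
    (hχ : χ.IsQF) : IsExistentialFormula (χ.iExs β) :=
  ⟨_, _, hχ.relabel _, rfl⟩

section ExistentiallyClosed

variable {M N : Type (max u v)} [L.Structure M] [L.Structure N] {f : M ↪[L] N}

theorem IsECVia.realize_iExs (hf : IsECVia f) {α β : Type*} [Finite α] [Finite β]
    {χ : L.Formula (α ⊕ β)} (hχ : χ.IsQF) {x : α → M} (hx : (χ.iExs β).Realize (f ∘ x)) :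
    (χ.iExs β).Realize x := by
  obtain ⟨k, ⟨e⟩⟩ := Finite.exists_equiv_fin α
  have := hf k ((χ.relabel (Sum.map e id)).iExs β)
    (isExistentialFormula_iExs (hχ.relabel (Sum.inl ∘ Sum.map e id))) (x ∘ e.symm)
  simp only [Formula.realize_iExs, Formula.realize_relabel, Sum.elim_comp_map, Function.comp_assoc,
    Equiv.symm_comp_self, Function.comp_id] at hx this ⊢
  exact this hx

theorem IsECVia.exists_realize_of_isQF [Nonempty M] (hf : IsECVia f) {χ : L.Formula N}
    (hχ : χ.IsQF) (hχN : χ.Realize id) : ∃ c : N → M, c ∘ f = id ∧ χ.Realize c := by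
  classical
  set s := χ.freeVarFinset
  let A := {m : M // f m ∈ s}
  have : Finite A := Finite.of_injective (fun a : A => (⟨f a, a.2⟩ : s))
    fun a b h => Subtype.ext (f.injective (congrArg Subtype.val h))
  -- parameters of `χ` in the image of `f` become parameters from `A`, the others are quantified
  let ρ : s → A ⊕ s := fun n =>
    if h : ∃ m, f m = n then .inl ⟨Function.invFun f n, (Function.invFun_eq h).symm ▸ n.2⟩
    else .inr n
  let ψ : L.Formula (A ⊕ s) := Formula.relabel ρ (χ.restrictFreeVar id)
  have hψ : ψ.IsQF := (hχ.restrictFreeVar id).relabel (Sum.inl ∘ ρ)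
  have hψN : (ψ.iExs s).Realize (f ∘ Subtype.val) := by
    refine Formula.realize_iExs.2 ⟨Subtype.val, Formula.realize_relabel.2 ?_⟩
    refine (realize_restrictFreeVar id fun n => ?_).2 hχN
    by_cases h : ∃ m, f m = n
    · simp [ρ, h, Function.invFun_eq h]
    · simp [ρ, h]
  obtain ⟨w, hw⟩ := Formula.realize_iExs.1 (hf.realize_iExs hψ hψN)
  refine ⟨fun n => if h : n ∈ s ∧ ¬∃ m, f m = n then w ⟨n, h.1⟩ else Function.invFun f n,
    funext fun m => by simp [Function.leftInverse_invFun f.injective m], ?_⟩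
  refine (realize_restrictFreeVar _ fun n => ?_).1 (Formula.realize_relabel.1 hw)
  by_cases h : ∃ m, f m = n <;> simp [ρ, h]

theorem IsECVia.exists_realize_of_finite [Nonempty M] (hf : IsECVia f) {Q : Set (L.Formula N)}
    (hQ : Q.Finite) (hQN : ∀ χ ∈ Q, χ.IsQF ∧ χ.Realize id) :
    ∃ c : N → M, c ∘ f = id ∧ ∀ χ ∈ Q, χ.Realize c := by
  have := hQ.to_subtype
  obtain ⟨c, hcf, hc⟩ := hf.exists_realize_of_isQF (χ := Formula.iInf fun χ : Q => χ.1)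
    (isQF_iInf fun χ => (hQN χ χ.2).1) (Formula.realize_iInf.2 fun χ => (hQN χ χ.2).2)
  exact ⟨c, hcf, fun χ hχ => Formula.realize_iInf.1 hc ⟨χ, hχ⟩⟩

end ExistentiallyClosed

def EmbedsInElementaryExtension {M N : Type (max u v)} [L.Structure M] [L.Structure N]
    (f : M ↪[L] N) : Prop :=
  ∃ (P : Type (max u v)) (_ : L.Structure P) (h : M ↪ₑ[L] P) (g : N ↪[L] P), ∀ m, g (f m) = h m

theorem IsECVia.embedsInElementaryExtension {M N : Type (max u v)} [L.Structure M]
    [L.Structure N] [Nonempty M] {f : M ↪[L] N} (hf : IsECVia f) :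
    EmbedsInElementaryExtension f := by
  let D : Set (L.Formula N) :=
    Formula.relabel f '' {φ | φ.Realize id} ∪ {χ | χ.IsQF ∧ χ.Realize id}
  obtain ⟨P, _, _, g, hg⟩ := exists_realize_of_finitely_realizable (Q := D) fun Q₀ hQ₀ => by
    obtain ⟨c, hcf, hc⟩ := hf.exists_realize_of_finite
      (Q := {χ ∈ (Q₀ : Set (L.Formula N)) | χ.IsQF ∧ χ.Realize id})
      (Q₀.finite_toSet.subset (Set.sep_subset _ _)) fun χ hχ => hχ.2
    refine ⟨M, inferInstance, inferInstance, c, fun χ hχ => ?_⟩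
    rcases hQ₀ hχ with ⟨φ, hφ, rfl⟩ | hχN
    · rwa [Formula.realize_relabel, hcf]
    · exact hc χ ⟨hχ, hχN⟩
  refine ⟨P, inferInstance, .ofRealize (g ∘ f) fun φ hφ => ?_,
    .ofRealizeQF g fun χ hχ hχN => hg χ (Or.inr ⟨hχ, hχN⟩), fun m => rfl⟩
  exact Formula.realize_relabel.1 (hg _ (Or.inl ⟨φ, hφ, rfl⟩))

theorem realize_boundedFormula_iff_of_embedsInElementaryExtension {T : L.Theory}
    (hT : ∀ (M N : Type (max u v)) [L.Structure M] [L.Structure N] [Nonempty M] [Nonempty N],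
      M ⊨ T → N ⊨ T → ∀ f : M ↪[L] N, EmbedsInElementaryExtension f)
    {α : Type*} {n : ℕ} (φ : L.BoundedFormula α n)
    (M N : Type (max u v)) [L.Structure M] [L.Structure N] [Nonempty M] [Nonempty N]
    (hM : M ⊨ T) (hN : N ⊨ T) (f : M ↪[L] N) (x : α → M) (xs : Fin n → M) :
    φ.Realize (f ∘ x) (f ∘ xs) ↔ φ.Realize x xs := by
  induction φ generalizing M N with
  | falsum => exact isQF_bot.realize_embedding f
  | equal t₁ t₂ => exact (IsAtomic.equal t₁ t₂).isQF.realize_embedding f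
  | rel R ts => exact (IsAtomic.rel R ts).isQF.realize_embedding f
  | imp φ ψ ihφ ihψ => simp only [realize_imp, ihφ M N hM hN, ihψ M N hM hN]
  | all φ ih =>
    rw [realize_all, realize_all]
    refine ⟨fun hφN a => ?_, fun hφM b => ?_⟩
    · rw [← ih M N hM hN f, Fin.comp_snoc]
      exact hφN (f a)
    · obtain ⟨P, _, h, g, hgf⟩ := hT M N hM hN f
      have : Nonempty P := Nonempty.map h ‹_›
      have hP : P ⊨ T := (h.theory_model_iff T).1 hM
      have hφP := realize_all.1 ((h.map_boundedFormula φ.all x xs).2 (realize_all.2 hφM)) (g b)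
      rw [← ih N P hN hP g, Fin.comp_snoc]
      convert hφP using 2 <;> ext <;> simp [hgf]

theorem isModelComplete_of_forall_embedsInElementaryExtension {T : L.Theory}
    (hT : ∀ (M N : Type (max u v)) [L.Structure M] [L.Structure N] [Nonempty M] [Nonempty N],
      M ⊨ T → N ⊨ T → ∀ f : M ↪[L] N, EmbedsInElementaryExtension f) :
    IsModelComplete T := fun M N _ _ _ _ hM hN f _ φ x => by
  simpa only [Formula.Realize, Subsingleton.elim (f ∘ default) default] using
    realize_boundedFormula_iff_of_embedsInElementaryExtension hT φ M N hM hN f x default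

/-- Robinson's test, first equivalence: a theory is model complete iff every model of it
is existentially closed for it. -/
theorem isModelComplete_iff_forall_isECFor (T : L.Theory) :
    IsModelComplete T ↔
      ∀ (M : Type (max u v)) [L.Structure M] [Nonempty M], M ⊨ T → IsECFor T M := by
  refine ⟨fun hT M _ _ hM => ⟨hM, fun N _ _ hN f k φ _ x => (hT M N hM hN f k φ x).1⟩,
    fun hT => isModelComplete_of_forall_embedsInElementaryExtension ?_⟩
  intro M N _ _ _ _ hM hN f
  exact ((hT M hM).2 N hN f).embedsInElementaryExtension
end

section
/- (Uniqueness of the model companion) If T₁* and T₂* are both model companions of a first-order theory T, then T₁* and T₂* have the same models: every L-structure is a model of T₁* if and only if it is a model of T₂*. -/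
open FirstOrder FirstOrder.Language

universe u v

variable {L : FirstOrder.Language.{u, v}}

/-! Starting from a model of `T₁`, alternate embeddings into models of `T₂` and of `T₁` (each
passing through a model of `T`) to get a chain `M₀ ↪ M₁ ↪ M₂ ↪ ⋯` whose even members model `T₁` and
odd members model `T₂`. By model completeness the even and the odd subchains are elementary, so by
Tarski's chain argument both `M₀` and `M₁` are elementary substructures of the union; hence `M₀` is
elementarily equivalent to `M₁ ⊨ T₂`. -/

namespace FirstOrder.Language.DirectLimit

variable {ι : Type*} [Preorder ι] [IsDirectedOrder ι] [Nonempty ι]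
  {G : ι → Type*} [∀ i, L.Structure (G i)] (f : ∀ i j, i ≤ j → G i ↪[L] G j)
  [DirectedSystem G fun i j h => f i j h]
  {P : ι → Prop} (hP : ∀ i, ∃ j, i ≤ j ∧ P j)
  (helem : ∀ i j (hij : i ≤ j), P i → P j →
    ∀ n (φ : L.Formula (Fin n)) (x : Fin n → G i), φ.Realize (f i j hij ∘ x) ↔ φ.Realize x)
include hP helem

/-- Tarski's elementary chain lemma, with the transition maps required to be elementary only
between indices in the cofinal set `P`. -/
theorem realize_boundedFormula_of_cofinal {α : Type*} {n : ℕ} (φ : L.BoundedFormula α n)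
    {i : ι} (hi : P i) (v : α → G i) (xs : Fin n → G i) :
    φ.Realize (of L ι G f i ∘ v) (of L ι G f i ∘ xs) ↔ φ.Realize v xs := by
  induction φ generalizing i with
  | falsum => rfl
  | equal t₁ t₂ =>
    simp only [BoundedFormula.Realize, ← Sum.comp_elim, HomClass.realize_term]
    exact (of L ι G f i).injective.eq_iff
  | rel R ts =>
    simp only [BoundedFormula.Realize, ← Sum.comp_elim, HomClass.realize_term]
    exact StrongHomClass.map_rel (of L ι G f i) R _
  | imp φ ψ ihφ ihψ => simp only [BoundedFormula.realize_imp, ihφ hi, ihψ hi]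
  | all φ ih =>
    simp only [BoundedFormula.realize_all]
    refine ⟨fun h a => (ih hi v _).1 ?_, fun h b => ?_⟩
    · simpa only [Fin.comp_snoc] using h (of L ι G f i a)
    obtain ⟨j, y, rfl⟩ := exists_of b
    obtain ⟨k', hik', hjk'⟩ := exists_ge_ge i j
    obtain ⟨k, hk'k, hk⟩ := hP k'
    have hik := hik'.trans hk'k
    have hjk := hjk'.trans hk'k
    let e : G i ↪ₑ[L] G k := ⟨f i k hik, helem i k hik hi hk⟩
    have hφ : φ.Realize (e ∘ v) (Fin.snoc (e ∘ xs) (f j k hjk y)) :=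
      (e.map_boundedFormula φ.all v xs).2 h _
    have hof : of L ι G f k ∘ f i k hik = of L ι G f i := funext fun _ => of_f
    have he : ⇑e = f i k hik := rfl
    rw [← ih hk, Fin.comp_snoc, he, ← Function.comp_assoc, ← Function.comp_assoc, hof] at hφ
    rwa [of_f] at hφ

noncomputable def ofElementaryOfCofinal {i : ι} (hi : P i) : G i ↪ₑ[L] DirectLimit G f where
  toFun := of L ι G f i
  map_formula' n φ x := by
    simpa only [Formula.Realize, Unique.eq_default (of L ι G f i ∘ default)] using
      realize_boundedFormula_of_cofinal f hP helem φ hi x default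

end FirstOrder.Language.DirectLimit

def ModelsEmbedIn (T T' : L.Theory) : Prop :=
  ∀ (M : Type (max u v)) [L.Structure M] [Nonempty M], M ⊨ T →
    ∃ (N : Type (max u v)) (_ : L.Structure N) (_ : Nonempty N), N ⊨ T' ∧ Nonempty (M ↪[L] N)

namespace ModelsEmbedIn

variable {T₁ T₂ T₃ : L.Theory}

theorem trans (h₁₂ : ModelsEmbedIn T₁ T₂) (h₂₃ : ModelsEmbedIn T₂ T₃) : ModelsEmbedIn T₁ T₃ := by
  intro M _ _ hM
  obtain ⟨N, _, _, hN, ⟨g⟩⟩ := h₁₂ M hM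
  obtain ⟨K, _, _, hK, ⟨g'⟩⟩ := h₂₃ N hN
  exact ⟨K, ‹_›, ‹_›, hK, ⟨g'.comp g⟩⟩

theorem exists_modelType (h : ModelsEmbedIn T₁ T₂) (M : Theory.ModelType.{u, v, max u v} T₁) :
    ∃ N : Theory.ModelType.{u, v, max u v} T₂, Nonempty (M ↪[L] N) := by
  obtain ⟨N, _, _, hN, hMN⟩ := h M inferInstance
  exact ⟨Theory.ModelType.of T₂ N, hMN⟩

end ModelsEmbedIn

section Chain

variable {Th : ℕ → L.Theory} (h : ∀ n, ModelsEmbedIn (Th n) (Th (n + 1)))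
  (M : Theory.ModelType.{u, v, max u v} (Th 0))

noncomputable def chainModel : ∀ n, Theory.ModelType.{u, v, max u v} (Th n)
  | 0 => M
  | n + 1 => ((h n).exists_modelType (chainModel n)).choose

noncomputable def chainEmbedding (n : ℕ) : chainModel h M n ↪[L] chainModel h M (n + 1) :=
  ((h n).exists_modelType (chainModel h M n)).choose_spec.some

end Chain

theorem Nat.exists_ge_even_iff (i m : ℕ) : ∃ j, m ≤ j ∧ (Even j ↔ Even i) := by
  by_cases hm : Even m ↔ Even i
  · exact ⟨m, le_rfl, hm⟩
  · exact ⟨m + 1, m.le_succ, by rw [Nat.even_add_one]; tauto⟩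

theorem FirstOrder.Language.Theory.Model.of_modelComplete_of_modelsEmbedIn {T₁ T₂ : L.Theory}
    (hc₁ : IsModelComplete T₁) (hc₂ : IsModelComplete T₂)
    (h₁₂ : ModelsEmbedIn T₁ T₂) (h₂₁ : ModelsEmbedIn T₂ T₁)
    {M : Type (max u v)} [L.Structure M] [Nonempty M] (hM : M ⊨ T₁) : M ⊨ T₂ := by
  let Th (n : ℕ) : L.Theory := if Even n then T₁ else T₂
  have hTh : ∀ {i j}, (Even j ↔ Even i) → Th j = Th i := fun h => by simp only [Th, h]
  have hc : ∀ n, IsModelComplete (Th n) := fun n => by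
    dsimp only [Th]; split_ifs <;> assumption
  have h : ∀ n, ModelsEmbedIn (Th n) (Th (n + 1)) := fun n => by
    by_cases hn : Even n <;> simp only [Th, hn, Nat.even_add_one, if_true, if_false] <;> assumption
  have : M ⊨ Th 0 := by simpa [Th] using hM
  let G := chainModel h (Theory.ModelType.of (Th 0) M)
  let F := DirectedSystem.natLERec (chainEmbedding h (Theory.ModelType.of (Th 0) M))
  have elem (i : ℕ) : G i ↪ₑ[L] Language.DirectLimit (fun n => G n) F :=
    DirectLimit.ofElementaryOfCofinal F (P := fun j => Even j ↔ Even i)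
      (Nat.exists_ge_even_iff i) (fun j k hjk hj hk => hc j _ _ (G j).is_model
        (hTh (hk.trans hj.symm) ▸ (G k).is_model) (F j k hjk)) Iff.rfl
  have : G 1 ⊨ T₂ := by simpa [Th] using (G 1).is_model
  exact ((elem 0).theory_model_iff T₂).2 (((elem 1).theory_model_iff T₂).1 this)

/-- Uniqueness of the model companion: two model companions of the same theory have
exactly the same models. -/
theorem modelCompanion_unique (T T₁ T₂ : L.Theory)
    (h₁ : IsModelCompanion T T₁) (h₂ : IsModelCompanion T T₂) :
    ∀ (M : Type (max u v)) [L.Structure M] [Nonempty M], M ⊨ T₁ ↔ M ⊨ T₂ := by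
  obtain ⟨hc₁, hT₁, h₁T⟩ := h₁
  obtain ⟨hc₂, hT₂, h₂T⟩ := h₂
  intro M _ _
  exact ⟨fun hM => hM.of_modelComplete_of_modelsEmbedIn hc₁ hc₂ (.trans h₁T hT₂) (.trans h₂T hT₁),
    fun hM => hM.of_modelComplete_of_modelsEmbedIn hc₂ hc₁ (.trans h₂T hT₁) (.trans h₁T hT₂)⟩
end

section
/- (Skolemization) For every first-order language L and every L-theory T there exist a language L' with a language morphism L → L' and an L'-theory T' containing (the image of) T such that: (i) every model of T has an expansion to an L'-structure that models T'; (ii) T' admits quantifier elimination (every L'-formula is equivalent modulo T' to a quantifier-free L'-formula); and (iii) T' is conservative over T: an L-sentence is a logical consequence of T' if and only if it is a logical consequence of T. -/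
/-!
Iterate Mathlib's one-step Skolem expansion `skolem₁` ω times: stage `k + 1` adds a function symbol
for every formula `∃ y, φ(x̄, y)` of stage `k`, and the Skolem language is the union of the stages.
The Skolem theory says that each of these symbols picks a witness whenever there is one. A formula
of the union already lives in a finite stage, so for quantifier-free `θ` the formula `∃ y, θ` is
equivalent to `θ` with the Skolem term substituted for `y`, which is again quantifier-free;
quantifier elimination follows by induction on prenex formulas. Every model of `T` expands to a
model of the Skolem theory by choosing the witnesses with `Classical.epsilon`, and this makes the
Skolem theory conservative over `T`.
-/

open FirstOrder FirstOrder.Language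

universe u v

theorem Monotone.exists_forall_mem {κ X ι : Type*} [Preorder κ] [IsDirectedOrder κ] [Nonempty κ]
    [Finite ι] {s : κ → Set X} (hs : Monotone s) {x : ι → X} (hx : ∀ i, ∃ k, x i ∈ s k) :
    ∃ k, ∀ i, x i ∈ s k := by
  choose k hk using hx
  obtain ⟨K, hK⟩ := Finite.exists_le k
  exact ⟨K, fun i => hs (hK i) (hk i)⟩

namespace FirstOrder.Language.BoundedFormula

variable {L : Language.{u, v}} {α β : Type*} {m : ℕ}

theorem IsAtomic.subst {φ : L.BoundedFormula α m} (h : φ.IsAtomic) (f : α → L.Term β) :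
    (φ.subst f).IsAtomic := by
  cases h <;> constructor

theorem IsQF.subst {φ : L.BoundedFormula α m} (h : φ.IsQF) (f : α → L.Term β) :
    (φ.subst f).IsQF := by
  induction h with
  | falsum => exact isQF_bot
  | of_isAtomic h => exact (h.subst f).isQF
  | imp _ _ ih₁ ih₂ => exact ih₁.imp ih₂

theorem IsAtomic.toFormula {φ : L.BoundedFormula α m} (h : φ.IsAtomic) :
    φ.toFormula.IsAtomic := by
  cases h <;> constructor

theorem IsQF.toFormula {φ : L.BoundedFormula α m} (h : φ.IsQF) : φ.toFormula.IsQF := by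
  induction h with
  | falsum => exact isQF_bot
  | of_isAtomic h => exact h.toFormula.isQF
  | imp _ _ ih₁ ih₂ => exact ih₁.imp ih₂

def substLast (φ : L.BoundedFormula α (m + 1)) (t : L.Term (α ⊕ Fin m)) :
    L.BoundedFormula α m :=
  (φ.toFormula.subst (Sum.elim (Term.var ∘ Sum.inl) (Fin.snoc (Term.var ∘ Sum.inr) t))).relabel id

theorem IsQF.substLast {φ : L.BoundedFormula α (m + 1)} (h : φ.IsQF) (t : L.Term (α ⊕ Fin m)) :
    (φ.substLast t).IsQF :=
  (h.toFormula.subst _).relabel id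

theorem realize_substLast {M : Type*} [L.Structure M] (φ : L.BoundedFormula α (m + 1))
    (t : L.Term (α ⊕ Fin m)) (v : α → M) (xs : Fin m → M) :
    (φ.substLast t).Realize v xs ↔ φ.Realize v (Fin.snoc xs (t.realize (Sum.elim v xs))) := by
  rw [substLast, realize_relabel, realize_subst, Fin.castAdd_zero,
    Subsingleton.elim (xs ∘ (Fin.natAdd m : Fin 0 → Fin m)) default,
    ← Formula.Realize, realize_toFormula]
  refine iff_of_eq (congr_arg _ (funext fun i => ?_))
  refine Fin.lastCases ?_ (fun i => ?_) i <;> simp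

theorem exists_isQF_iff_of_ex {T : L.Theory}
    (hex : ∀ {m} (φ : L.BoundedFormula α (m + 1)), φ.IsQF →
      ∃ ψ : L.BoundedFormula α m, ψ.IsQF ∧ φ.ex ⇔[T] ψ)
    {n : ℕ} (φ : L.BoundedFormula α n) : ∃ ψ : L.BoundedFormula α n, ψ.IsQF ∧ φ ⇔[T] ψ := by
  refine φ.induction_on_exists_not
    (P := fun {m} φ => ∃ ψ : L.BoundedFormula α m, ψ.IsQF ∧ φ ⇔[T] ψ)
    (fun hφ => ⟨_, hφ, .refl _⟩) ?_ ?_ ?_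
  · rintro m φ ⟨ψ, hψ, hφψ⟩
    exact ⟨ψ.not, hψ.not, hφψ.not⟩
  · rintro m φ ⟨ψ, hψ, hφψ⟩
    obtain ⟨χ, hχ, hψχ⟩ := hex ψ hψ
    exact ⟨χ, hχ, hφψ.ex.trans hψχ⟩
  · intro m φ₁ φ₂ h
    have hT : φ₁ ⇔[T] φ₂ := fun M v xs => realize_iff.2 h.realize_bd_iff
    exact exists_congr fun ψ => and_congr_right fun _ => ⟨hT.symm.trans, hT.trans⟩

end FirstOrder.Language.BoundedFormula

theorem FirstOrder.Language.Formula.exists_isQF_iff_of_boundedFormula {L : Language.{u, v}}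
    {T : L.Theory} {n : ℕ}
    (h : ∀ φ : L.BoundedFormula Empty n, ∃ ψ : L.BoundedFormula Empty n, ψ.IsQF ∧ φ ⇔[T] ψ)
    (φ : L.Formula (Fin n)) : ∃ ψ : L.Formula (Fin n), ψ.IsQF ∧ φ ⇔[T] ψ := by
  obtain ⟨ψ, hψ, hφψ⟩ := h (BoundedFormula.relabel Sum.inr φ)
  refine ⟨ψ.toFormula.relabel (Sum.elim Empty.elim id), hψ.toFormula.relabel _, fun M v xs => ?_⟩
  have := hφψ.realize_bd_iff (v := default) (xs := v)
  rw [Formula.realize_relabel_sumInr] at this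
  rw [BoundedFormula.realize_iff, Unique.eq_default xs, ← Formula.Realize, ← Formula.Realize, this,
    Formula.realize_relabel, BoundedFormula.realize_toFormula, Unique.eq_default (_ ∘ Sum.inl)]
  rfl

namespace FirstOrder.Language.LHom

theorem onSentence_models_iff {L : Language.{u, v}} {L' : Language} (F : L →ᴸ L')
    {T : L.Theory} {T' : L'.Theory} (hT : F.onTheory T ⊆ T')
    (hexp : ∀ (M : Type (max u v)) [inst : L.Structure M] [Nonempty M], M ⊨ T →
      ∃ inst' : L'.Structure M, @IsExpansionOn L L' F M inst inst' ∧ M ⊨ T')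
    (φ : L.Sentence) : T' ⊨ᵇ F.onSentence φ ↔ T ⊨ᵇ φ := by
  refine ⟨fun h => Theory.models_sentence_iff.2 fun M => ?_,
    fun h => Theory.models_sentence_iff.2 fun M => ?_⟩
  · obtain ⟨_, _, _⟩ := hexp M M.is_model
    exact (F.realize_onSentence M φ).1 (h.realize_sentence M)
  · let _ := F.reduct M
    have : M ⊨ T := (F.onTheory_model T).1 (M.is_model.mono hT)
    exact (F.realize_onSentence M φ).2 (h.realize_sentence M)

end FirstOrder.Language.LHom

namespace FirstOrder.Language.Skolemization

open BoundedFormula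

variable (L : Language.{u, v})

/-- `skolem₁` raises the universe of function symbols to `max u v`, so the base of the tower is
lifted there already. -/
def ulift : Language.{max u v, v} :=
  ⟨fun n => ULift.{v} (L.Functions n), L.Relations⟩

def stage : ℕ → Language.{max u v, v}
  | 0 => ulift L
  | k + 1 => (stage k).sum (stage k).skolem₁

/-- The union of the stages: besides the symbols of `L`, a function symbol `Sum.inr ⟨k, φ⟩` for
each formula `φ` of stage `k`, which is the Skolem function added in stage `k + 1`. -/
def language : Language.{max u v, v} :=
  ⟨fun n => L.Functions n ⊕ Σ k, (stage L k).BoundedFormula Empty (n + 1), L.Relations⟩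

def stageLHom : ∀ k, stage L k →ᴸ language L
  | 0 => ⟨fun _ f => Sum.inl f.down, fun _ r => r⟩
  | k + 1 => ⟨fun n => Sum.elim ((stageLHom k).onFunction (n := n)) fun φ => Sum.inr ⟨k, φ⟩,
      fun n => Sum.elim ((stageLHom k).onRelation (n := n)) Empty.elim⟩

def lhom : L →ᴸ language L := ⟨fun _ => Sum.inl, fun _ => id⟩

variable {L}

def skolemFun {k n : ℕ} (φ : (stage L k).BoundedFormula Empty (n + 1)) :
    (language L).Functions n :=
  Sum.inr ⟨k, φ⟩

def skolemTerm {k n : ℕ} (φ : (stage L k).BoundedFormula Empty (n + 1)) :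
    (language L).Term (Empty ⊕ Fin n) :=
  Term.func (skolemFun φ) fun i => Term.var (Sum.inr i)

def skolemAxiom {k n : ℕ} (φ : (stage L k).BoundedFormula Empty (n + 1)) :
    (language L).Sentence :=
  let φ' := (stageLHom L k).onBoundedFormula φ
  (φ'.ex.imp (φ'.substLast (skolemTerm φ))).alls

variable (L) in
def theory (T : L.Theory) : (language L).Theory :=
  (lhom L).onTheory T ∪
    {ψ | ∃ (k n : ℕ) (φ : (stage L k).BoundedFormula Empty (n + 1)), skolemAxiom φ = ψ}

theorem realize_skolemAxiom {A : Type*} [(language L).Structure A] {k n : ℕ}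
    (φ : (stage L k).BoundedFormula Empty (n + 1)) :
    A ⊨ skolemAxiom φ ↔ ∀ xs : Fin n → A,
      (∃ a, ((stageLHom L k).onBoundedFormula φ).Realize default (Fin.snoc xs a)) →
      ((stageLHom L k).onBoundedFormula φ).Realize default
        (Fin.snoc xs (Structure.funMap (skolemFun φ) xs)) := by
  rw [skolemAxiom, Sentence.Realize, realize_alls]
  refine forall_congr' fun xs => ?_
  rw [realize_imp, realize_ex, realize_substLast]
  rfl

theorem stageLHom_comp_sumInl (k : ℕ) :
    (stageLHom L (k + 1)).comp (LHom.sumInl : stage L k →ᴸ stage L (k + 1)) = stageLHom L k :=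
  LHom.funext rfl rfl

section Directed

variable {α : Type*} {n : ℕ}

theorem monotone_range_onFunction :
    Monotone fun k => Set.range ((stageLHom L k).onFunction (n := n)) :=
  monotone_nat_of_le_succ fun _ => by
    rintro _ ⟨f, rfl⟩
    exact ⟨Sum.inl f, rfl⟩

theorem monotone_range_onRelation :
    Monotone fun k => Set.range ((stageLHom L k).onRelation (n := n)) :=
  monotone_nat_of_le_succ fun _ => by
    rintro _ ⟨r, rfl⟩
    exact ⟨Sum.inl r, rfl⟩

theorem monotone_range_onTerm :
    Monotone fun k => Set.range ((stageLHom L k).onTerm : (stage L k).Term α → _) :=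
  monotone_nat_of_le_succ fun k => by
    have h := LHom.comp_onTerm (α := α) (stageLHom L (k + 1)) LHom.sumInl
    rw [stageLHom_comp_sumInl] at h
    exact h ▸ Set.range_comp_subset_range _ _

theorem monotone_range_onBoundedFormula :
    Monotone fun k =>
      Set.range ((stageLHom L k).onBoundedFormula : (stage L k).BoundedFormula α n → _) :=
  monotone_nat_of_le_succ fun k => by
    have h := LHom.comp_onBoundedFormula (α := α) (n := n) (stageLHom L (k + 1)) LHom.sumInl
    rw [stageLHom_comp_sumInl] at h
    exact h ▸ Set.range_comp_subset_range _ _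

theorem exists_mem_range_onTerm (t : (language L).Term α) :
    ∃ k, t ∈ Set.range (stageLHom L k).onTerm := by
  induction t with
  | var a => exact ⟨0, Term.var a, rfl⟩
  | @func l f ts ih =>
    obtain ⟨kf, hf⟩ : ∃ k, f ∈ Set.range ((stageLHom L k).onFunction (n := l)) := by
      rcases f with f | ⟨k, φ⟩
      · exact ⟨0, ULift.up f, rfl⟩
      · exact ⟨k + 1, Sum.inr φ, rfl⟩
    obtain ⟨K, hK⟩ := monotone_range_onTerm.exists_forall_mem ih
    obtain ⟨f₀, rfl⟩ := monotone_range_onFunction (le_max_left kf K) hf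
    choose ts₀ hts₀ using fun i => monotone_range_onTerm (le_max_right kf K) (hK i)
    exact ⟨max kf K, Term.func f₀ ts₀, by simp only [LHom.onTerm, hts₀]⟩

theorem exists_mem_range_onBoundedFormula (φ : (language L).BoundedFormula α n) :
    ∃ k, φ ∈ Set.range (stageLHom L k).onBoundedFormula := by
  induction φ with
  | falsum => exact ⟨0, falsum, rfl⟩
  | equal t₁ t₂ =>
    obtain ⟨k₁, h₁⟩ := exists_mem_range_onTerm t₁
    obtain ⟨k₂, h₂⟩ := exists_mem_range_onTerm t₂
    obtain ⟨s₁, rfl⟩ := monotone_range_onTerm (le_max_left k₁ k₂) h₁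
    obtain ⟨s₂, rfl⟩ := monotone_range_onTerm (le_max_right k₁ k₂) h₂
    exact ⟨_, s₁.bdEqual s₂, rfl⟩
  | rel R ts =>
    obtain ⟨K, hK⟩ := monotone_range_onTerm.exists_forall_mem
      fun i => exists_mem_range_onTerm (ts i)
    choose ts₀ hts₀ using hK
    obtain ⟨R₀, hR₀⟩ := monotone_range_onRelation (Nat.zero_le K) ⟨R, rfl⟩
    exact ⟨K, .rel R₀ ts₀, by simp only [LHom.onBoundedFormula, hR₀, Function.comp_def, hts₀]; rfl⟩
  | imp φ₁ φ₂ ih₁ ih₂ =>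
    obtain ⟨k₁, h₁⟩ := ih₁
    obtain ⟨k₂, h₂⟩ := ih₂
    obtain ⟨ψ₁, rfl⟩ := monotone_range_onBoundedFormula (le_max_left k₁ k₂) h₁
    obtain ⟨ψ₂, rfl⟩ := monotone_range_onBoundedFormula (le_max_right k₁ k₂) h₂
    exact ⟨_, ψ₁.imp ψ₂, rfl⟩
  | all φ ih =>
    obtain ⟨k, φ₀, rfl⟩ := ih
    exact ⟨k, φ₀.all, rfl⟩

end Directed

section Expansion

variable (L) (M : Type*) [L.Structure M] [Nonempty M]

@[reducible] noncomputable def stageStructure : ∀ k, (stage L k).Structure M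
  | 0 => ⟨fun f => Structure.funMap f.down, fun r => Structure.RelMap (L := L) r⟩
  | k + 1 =>
    letI := stageStructure k
    inferInstanceAs (((stage L k).sum (stage L k).skolem₁).Structure M)

@[reducible] noncomputable def expansion : (language L).Structure M where
  funMap f x := Sum.elim (Structure.funMap · x)
    (fun p => letI := stageStructure L M p.1
      Classical.epsilon fun a => p.2.Realize default (Fin.snoc x a)) f
  RelMap r := Structure.RelMap (L := L) r

theorem isExpansionOn_lhom : @LHom.IsExpansionOn L _ (lhom L) M _ (expansion L M) :=
  @LHom.IsExpansionOn.mk L _ (lhom L) M _ (expansion L M) (fun _ _ => rfl) (fun _ _ => rfl)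

theorem isExpansionOn_stageLHom :
    ∀ k, @LHom.IsExpansionOn _ _ (stageLHom L k) M (stageStructure L M k) (expansion L M)
  | 0 => @LHom.IsExpansionOn.mk _ _ _ M (stageStructure L M 0) (expansion L M)
      (fun _ _ => rfl) (fun _ _ => rfl)
  | k + 1 => by
    have ih := isExpansionOn_stageLHom k
    refine @LHom.IsExpansionOn.mk _ _ _ M (stageStructure L M (k + 1)) (expansion L M) ?_ ?_
    · rintro n (f | φ) xs
      · exact ih.map_onFunction f xs
      · rfl
    · rintro n (r | r) xs
      · exact ih.map_onRelation r xs
      · exact r.elim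

theorem theory_model {T : L.Theory} (hM : M ⊨ T) :
    @Theory.Model _ M (expansion L M) (theory L T) := by
  let _ := expansion L M
  have := isExpansionOn_lhom L M
  refine Theory.model_iff _ |>.2 ?_
  rintro _ (⟨ψ, hψ, rfl⟩ | ⟨k, n, φ, rfl⟩)
  · exact (LHom.realize_onSentence M _ ψ).2 (T.realize_sentence_of_mem hψ)
  · let _ := stageStructure L M k
    have := isExpansionOn_stageLHom L M k
    rw [realize_skolemAxiom]
    rintro xs ⟨a, ha⟩
    rw [LHom.realize_onBoundedFormula] at ha ⊢
    exact Classical.epsilon_spec (p := fun a => φ.Realize default (Fin.snoc xs a)) ⟨a, ha⟩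

end Expansion

theorem ex_iff_substLast_skolemTerm (T : L.Theory) {k n : ℕ}
    (φ : (stage L k).BoundedFormula Empty (n + 1)) :
    ((stageLHom L k).onBoundedFormula φ).ex ⇔[theory L T]
      ((stageLHom L k).onBoundedFormula φ).substLast (skolemTerm φ) := by
  intro A v xs
  have hax : A ⊨ skolemAxiom φ := (theory L T).realize_sentence_of_mem (Or.inr ⟨k, n, φ, rfl⟩)
  rw [realize_iff, realize_ex, realize_substLast, Subsingleton.elim v default]
  exact ⟨(realize_skolemAxiom φ).1 hax xs, fun h => ⟨_, h⟩⟩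

theorem exists_isQF_iff (T : L.Theory) {n : ℕ} (φ : (language L).BoundedFormula Empty n) :
    ∃ ψ : (language L).BoundedFormula Empty n, ψ.IsQF ∧ φ ⇔[theory L T] ψ := by
  refine exists_isQF_iff_of_ex (fun θ hθ => ?_) φ
  obtain ⟨k, θ₀, rfl⟩ := exists_mem_range_onBoundedFormula θ
  exact ⟨_, hθ.substLast _, ex_iff_substLast_skolemTerm T θ₀⟩

end FirstOrder.Language.Skolemization

open FirstOrder.Language.Skolemization in
/-- Skolemization: every theory `T` has a conservative extension `T'` in an expanded
language which admits quantifier elimination, such that every model of `T` expands to a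
model of `T'`. -/
theorem skolemization (L : FirstOrder.Language.{u, v}) (T : L.Theory) :
    ∃ (L' : FirstOrder.Language.{max u v, v}) (F : L →ᴸ L') (T' : L'.Theory),
      -- `T'` contains the image of `T`
      F.onTheory T ⊆ T' ∧
      -- every model of `T` has an expansion to an `L'`-structure modelling `T'`
      (∀ (M : Type (max u v)) [inst : L.Structure M] [Nonempty M], M ⊨ T →
        ∃ inst' : L'.Structure M,
          @FirstOrder.Language.LHom.IsExpansionOn L L' F M inst inst' ∧
          @FirstOrder.Language.Theory.Model L' M inst' T') ∧
      -- `T'` admits quantifier elimination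
      (∀ (n : ℕ) (φ : L'.Formula (Fin n)), ∃ ψ : L'.Formula (Fin n),
        ψ.IsQF ∧ T' ⊨ᵇ φ.iff ψ) ∧
      -- `T'` is conservative over `T`
      (∀ φ : L.Sentence, T' ⊨ᵇ F.onSentence φ ↔ T ⊨ᵇ φ) := by
  have hexp (M : Type (max u v)) [L.Structure M] [Nonempty M] (hM : M ⊨ T) :
      ∃ inst' : (language L).Structure M,
        @LHom.IsExpansionOn L _ (lhom L) M _ inst' ∧ @Theory.Model _ M inst' (theory L T) :=
    ⟨expansion L M, isExpansionOn_lhom L M, theory_model L M hM⟩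
  refine ⟨language L, lhom L, theory L T, Set.subset_union_left, hexp, fun n φ => ?_,
    (lhom L).onSentence_models_iff Set.subset_union_left hexp⟩
  exact Formula.exists_isQF_iff_of_boundedFormula (exists_isQF_iff T) φ
end
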